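/- Limit of rejection probability at infinity: assume π satisfies (A1), i.e. lim_{|x|→∞} π(x)/π(xε) = |ε|^p for some 1 < p ≤ ∞ and all ε ∈ Y=(-1,1)\{0} (with |ε|^∞ := 0). Then the RDMH rejection probability ρ(x) = (1/2)∫_{r(x)}(1 - π(xε)|ε|/π(x))g(ε)dε + (1/2)∫_{R(x)}(1 - π(x/ε)/(π(x)|ε|))g(ε)dε converges, as |x| → ∞, to (1/2)∫_Y (1 - |ε|^{p-1}) g(ε) dε. -/

import Mathlib

open MeasureTheory Set Filter

/-- The set of admissible multipliers `Y = (-1,1) \ {0}`. -/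
def rdmhY : Set ℝ := Ioo (-1 : ℝ) 1 \ {0}

/-- Potential inner rejection region `r(x)`. -/
def innerRej (π : ℝ → ℝ) (x : ℝ) : Set ℝ :=
  {ε ∈ rdmhY | π (x * ε) * |ε| / π x < 1}

/-- Potential outer rejection region `R(x)`. -/
def outerRej (π : ℝ → ℝ) (x : ℝ) : Set ℝ :=
  {ε ∈ rdmhY | π (x / ε) / (π x * |ε|) < 1}

/-- The rejection probability of the RDMH chain at `x`. -/
noncomputable def rdmhRho (g π : ℝ → ℝ) (x : ℝ) : ℝ :=
  (1 / 2) * (∫ ε in innerRej π x, (1 - π (x * ε) * |ε| / π x) * g ε) +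
  (1 / 2) * (∫ ε in outerRej π x, (1 - π (x / ε) / (π x * |ε|)) * g ε)

open Topology

/-! On the rejection regions the integrand is `(1 - q) g` with `0 ≤ q < 1`, that is `(1 - q)⁺ g`,
so both integrals are dominated by `|g|`. By (A1) the inner ratio `π(xε)|ε|/π(x)` eventually
exceeds `1`, so every `ε` eventually leaves `r(x)`, while the outer ratio `π(x/ε)/(π(x)|ε|)`
tends to `|ε|^(p-1) < 1`, so `ε` eventually lies in `R(x)`. Dominated convergence concludes. -/

section RejectionIntegral

variable {β ι : Type*} [MeasurableSpace β] {μ : Measure β} {s : Set β} {g : β → ℝ}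

theorem setIntegral_sublevel_one_sub_mul_eq {q : β → ℝ} (hq : Measurable q) :
    ∫ ε in {ε ∈ s | q ε < 1}, (1 - q ε) * g ε ∂μ = ∫ ε in s, max (1 - q ε) 0 * g ε ∂μ := by
  change ∫ ε in s ∩ {ε | q ε < 1}, _ ∂μ = _
  rw [← setIntegral_indicator (measurableSet_lt hq measurable_const)]
  refine integral_congr_ae (ae_of_all _ fun ε => ?_)
  by_cases hε : q ε < 1
  · simp [hε, max_eq_left (sub_nonneg.2 hε.le)]
  · simp [hε, max_eq_right (sub_nonpos.2 (not_lt.1 hε))]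

theorem tendsto_setIntegral_max_one_sub_mul {l : Filter ι} [l.IsCountablyGenerated]
    {q : ι → β → ℝ} {f : β → ℝ} (hs : MeasurableSet s) (hg : IntegrableOn g s μ)
    (hq_meas : ∀ i, Measurable (q i)) (hq_nonneg : ∀ i ε, 0 ≤ q i ε)
    (hq_lim : ∀ ε ∈ s, Tendsto (fun i => max (1 - q i ε) 0) l (𝓝 (f ε))) :
    Tendsto (fun i => ∫ ε in s, max (1 - q i ε) 0 * g ε ∂μ) l
      (𝓝 (∫ ε in s, f ε * g ε ∂μ)) := by
  refine tendsto_integral_filter_of_dominated_convergence (fun ε => ‖g ε‖)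
    (Eventually.of_forall fun i =>
      ((((hq_meas i).const_sub 1).max measurable_const).aestronglyMeasurable).mul
        hg.aestronglyMeasurable)
    (Eventually.of_forall fun i => ae_of_all _ fun ε => ?_) hg.norm
    ((ae_restrict_iff' hs).2 (ae_of_all _ fun ε hε => (hq_lim ε hε).mul_const _))
  rw [norm_mul, Real.norm_of_nonneg (le_max_right _ _)]
  exact mul_le_of_le_one_left (norm_nonneg _) (max_le (by linarith [hq_nonneg i ε]) zero_le_one)

end RejectionIntegral

theorem measurableSet_rdmhY : MeasurableSet rdmhY :=
  measurableSet_Ioo.diff (measurableSet_singleton 0)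

theorem abs_pos_of_mem_rdmhY {ε : ℝ} (hε : ε ∈ rdmhY) : 0 < |ε| :=
  abs_pos.2 hε.2

theorem abs_lt_one_of_mem_rdmhY {ε : ℝ} (hε : ε ∈ rdmhY) : |ε| < 1 :=
  abs_lt.2 hε.1

theorem tendsto_div_const_comap_abs_atTop {ε : ℝ} (hε : ε ≠ 0) :
    Tendsto (fun x : ℝ => x / ε) (comap (fun x : ℝ => |x|) atTop)
      (comap (fun x : ℝ => |x|) atTop) := by
  rw [tendsto_comap_iff]
  refine (tendsto_comap.atTop_div_const (abs_pos.2 hε)).congr fun x => ?_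
  simp [abs_div]

section Limits

variable {π : ℝ → ℝ} {h g : ℝ → ℝ}

theorem tendsto_integral_innerRej (hπ_pos : ∀ z, 0 < π z) (hπ_cont : Continuous π)
    (hg : IntegrableOn g rdmhY) (hlt : ∀ ε ∈ rdmhY, h ε < |ε|)
    (hA1 : ∀ ε ∈ rdmhY,
      Tendsto (fun x : ℝ => π x / π (x * ε)) (comap (fun x : ℝ => |x|) atTop) (𝓝 (h ε))) :
    Tendsto (fun x => ∫ ε in innerRej π x, (1 - π (x * ε) * |ε| / π x) * g ε)
      (comap (fun x : ℝ => |x|) atTop) (𝓝 0) := by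
  have hq_meas (x : ℝ) : Measurable fun ε => π (x * ε) * |ε| / π x :=
    ((hπ_cont.comp (continuous_const_mul x)).mul continuous_abs).measurable.div_const _
  rw [show (0 : ℝ) = ∫ ε in rdmhY, (0 : ℝ → ℝ) ε * g ε by simp]
  simp only [innerRej, setIntegral_sublevel_one_sub_mul_eq (hq_meas _)]
  refine tendsto_setIntegral_max_one_sub_mul measurableSet_rdmhY hg hq_meas
    (fun x ε => by positivity [hπ_pos (x * ε), hπ_pos x]) fun ε hε => ?_
  refine tendsto_const_nhds.congr' ?_
  filter_upwards [(hA1 ε hε).eventually_lt_const (hlt ε hε)] with x hx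
  rw [div_lt_iff₀ (hπ_pos _)] at hx
  have hratio : 1 < π (x * ε) * |ε| / π x := by rw [one_lt_div (hπ_pos x)]; linarith
  simp [max_eq_right (by linarith : 1 - π (x * ε) * |ε| / π x ≤ 0)]

theorem tendsto_integral_outerRej (hπ_pos : ∀ z, 0 < π z) (hπ_cont : Continuous π)
    (hg : IntegrableOn g rdmhY) (hle : ∀ ε ∈ rdmhY, h ε ≤ |ε|)
    (hA1 : ∀ ε ∈ rdmhY,
      Tendsto (fun x : ℝ => π x / π (x * ε)) (comap (fun x : ℝ => |x|) atTop) (𝓝 (h ε))) :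
    Tendsto (fun x => ∫ ε in outerRej π x, (1 - π (x / ε) / (π x * |ε|)) * g ε)
      (comap (fun x : ℝ => |x|) atTop) (𝓝 (∫ ε in rdmhY, (1 - h ε / |ε|) * g ε)) := by
  have hq_meas (x : ℝ) : Measurable fun ε => π (x / ε) / (π x * |ε|) :=
    (hπ_cont.measurable.comp (measurable_const.div measurable_id)).div
      (measurable_const.mul continuous_abs.measurable)
  simp only [outerRej, setIntegral_sublevel_one_sub_mul_eq (hq_meas _)]
  refine tendsto_setIntegral_max_one_sub_mul measurableSet_rdmhY hg hq_meas
    (fun x ε => by positivity [hπ_pos (x / ε), hπ_pos x]) fun ε hε => ?_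
  have hratio : Tendsto (fun x => π (x / ε) / (π x * |ε|)) (comap (fun x : ℝ => |x|) atTop)
      (𝓝 (h ε / |ε|)) := by
    refine (((hA1 ε hε).comp (tendsto_div_const_comap_abs_atTop hε.2)).div_const |ε|).congr
      fun x => ?_
    simp [div_mul_cancel₀ x hε.2, div_div]
  have hlim_nonneg : 0 ≤ 1 - h ε / |ε| :=
    sub_nonneg.2 ((div_le_one (abs_pos_of_mem_rdmhY hε)).2 (hle ε hε))
  rw [← max_eq_left hlim_nonneg]
  exact (tendsto_const_nhds.sub hratio).max tendsto_const_nhds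

end Limits

theorem lt_abs_of_mem_rdmhY {p : ENNReal} (hp : 1 < p) {h : ℝ → ℝ}
    (hh_fin : p ≠ ⊤ → ∀ ε : ℝ, h ε = |ε| ^ p.toReal) (hh_top : p = ⊤ → ∀ ε : ℝ, h ε = 0)
    {ε : ℝ} (hε : ε ∈ rdmhY) : h ε < |ε| := by
  rcases eq_or_ne p ⊤ with hp_top | hp_top
  · rw [hh_top hp_top ε]
    exact abs_pos_of_mem_rdmhY hε
  · rw [hh_fin hp_top ε]
    refine Real.rpow_lt_self_of_lt_one (abs_pos_of_mem_rdmhY hε) (abs_lt_one_of_mem_rdmhY hε) ?_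
    simpa using (ENNReal.toReal_lt_toReal ENNReal.one_ne_top hp_top).2 hp

theorem stmt_10_general (g : ℝ → ℝ) (hg_int : IntegrableOn g rdmhY)
    (π : ℝ → ℝ) (hπ_pos : ∀ z, 0 < π z) (hπ_cont : Continuous π)
    (p : ENNReal) (hp : 1 < p)
    (h : ℝ → ℝ)
    (hh_fin : p ≠ ⊤ → ∀ ε : ℝ, h ε = |ε| ^ p.toReal)
    (hh_top : p = ⊤ → ∀ ε : ℝ, h ε = 0)
    (hA1 : ∀ ε ∈ rdmhY,
      Tendsto (fun x : ℝ => π x / π (x * ε)) (comap (fun x : ℝ => |x|) atTop)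
        (nhds (h ε))) :
    Tendsto (rdmhRho g π) (comap (fun x : ℝ => |x|) atTop)
      (nhds ((1 / 2) * ∫ ε in rdmhY, (1 - h ε / |ε|) * g ε)) := by
  have hlt (ε : ℝ) (hε : ε ∈ rdmhY) : h ε < |ε| := lt_abs_of_mem_rdmhY hp hh_fin hh_top hε
  have hinner := tendsto_integral_innerRej hπ_pos hπ_cont hg_int hlt hA1
  have houter :=
    tendsto_integral_outerRej hπ_pos hπ_cont hg_int (fun ε hε => (hlt ε hε).le) hA1
  have hsum := (hinner.const_mul (1 / 2 : ℝ)).add (houter.const_mul (1 / 2 : ℝ))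
  rwa [mul_zero, zero_add] at hsum

theorem stmt_10 (g : ℝ → ℝ) (hg_meas : Measurable g) (hg_nonneg : ∀ ε, 0 ≤ g ε)
    (hg_supp : ∀ ε, ε ∉ rdmhY → g ε = 0) (hg_int : IntegrableOn g rdmhY)
    (hg_one : ∫ ε in rdmhY, g ε = 1)
    (π : ℝ → ℝ) (hπ_pos : ∀ z, 0 < π z) (hπ_cont : Continuous π)
    (p : ENNReal) (hp : 1 < p)
    (h : ℝ → ℝ)
    (hh_fin : p ≠ ⊤ → ∀ ε : ℝ, h ε = |ε| ^ p.toReal)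
    (hh_top : p = ⊤ → ∀ ε : ℝ, h ε = 0)
    (hA1 : ∀ ε ∈ rdmhY,
      Tendsto (fun x : ℝ => π x / π (x * ε)) (comap (fun x : ℝ => |x|) atTop)
        (nhds (h ε))) :
    Tendsto (rdmhRho g π) (comap (fun x : ℝ => |x|) atTop)
      (nhds ((1 / 2) * ∫ ε in rdmhY, (1 - h ε / |ε|) * g ε)) :=
  stmt_10_general g hg_int π hπ_pos hπ_cont p hp h hh_fin hh_top hA1
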